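/- If a segment of a Morton curve is fully contained in the level-1 subtrees enumerated by the interval I^{d'}_k = [k·2^{d'}, (k+1)·2^{d'}), and it contains the first or the last level-L quadrant in this range of subtrees, then it is face-connected. Precisely: let L ≥ 1, 0 ≤ d' ≤ d, 0 ≤ k < 2^{d−d'}, and let a ≤ b be such that k·2^{d'}·2^{d(L−1)} ≤ a ≤ b < (k+1)·2^{d'}·2^{d(L−1)}; if a = k·2^{d'}·2^{d(L−1)} or b = (k+1)·2^{d'}·2^{d(L−1)} − 1, then the set of level-L quadrants {Q : a ≤ Q ≤ b} is face-connected. -/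

import Mathlib

/-- The `r`-th coordinate (1 ≤ r ≤ d) of a level-`L` quadrant `Q` in dimension `d`. -/
def mortonCoord (d L r Q : ℕ) : ℕ :=
  ∑ ℓ ∈ Finset.range L, (Q / 2 ^ (ℓ * d + (r - 1)) % 2) * 2 ^ ℓ

/-- Two level-`L` quadrants are face-neighbors: they differ by exactly one in exactly
one coordinate and agree in all other coordinates. -/
def MortonFaceNbr (d L Q Q' : ℕ) : Prop :=
  Q ≠ Q' ∧ ∃ r, 1 ≤ r ∧ r ≤ d ∧
    ((mortonCoord d L r Q : ℤ) - (mortonCoord d L r Q' : ℤ)).natAbs = 1 ∧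
    ∀ s, 1 ≤ s → s ≤ d → s ≠ r → mortonCoord d L s Q = mortonCoord d L s Q'

/-- A set of level-`L` quadrants is face-connected: the graph on `S` whose edges join
face-neighbors is connected. -/
def MortonFaceConnected (d L : ℕ) (S : Set ℕ) : Prop :=
  ∀ Q ∈ S, ∀ Q' ∈ S,
    Relation.ReflTransGen (fun a b => a ∈ S ∧ b ∈ S ∧ MortonFaceNbr d L a b) Q Q'

/-- `S` has at most `n` face-connected components: it can be written as a union of `n`
face-connected subsets. -/
def MortonCompBound (d L : ℕ) (S : Set ℕ) (n : ℕ) : Prop :=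
  ∃ f : Fin n → Set ℕ, S = ⋃ i, f i ∧ ∀ i, MortonFaceConnected d L (f i)

/-!
Descend along face-neighbors towards the prescribed end of the segment, without leaving the
block `[k·2^N, (k+1)·2^N)`, `N = d' + d(L-1) ≤ dL`. If `Q` is not the first quadrant of the
block, its lowest set bit `i < N` is the level-`ℓ` bit of some coordinate `r`, whose bits at
levels `≤ ℓ` read `1 0…0`. Flipping them to `0 1…1` decrements coordinate `r` and leaves the
other coordinates alone, and it yields a smaller quadrant of the same block. Symmetrically,
flipping the same bits at the lowest zero bit increments a coordinate and moves towards the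
end of the block.
-/

open Finset

namespace Nat

theorem testBit_sum_two_pow (s : Finset ℕ) (n : ℕ) :
    (∑ i ∈ s, 2 ^ i).testBit n = decide (n ∈ s) := by
  rw [Bool.eq_iff_iff, decide_eq_true_iff, ← mem_bitIndices, ← List.mem_toFinset,
    Finset.toFinset_bitIndices_sum_two_pow]

theorem exists_lowest_testBit_eq (b : Bool) {Q N : ℕ} (h : ∃ i < N, Q.testBit i = b) :
    ∃ i < N, Q.testBit i = b ∧ ∀ n < i, Q.testBit n = !b := by
  obtain ⟨hN, hb⟩ := Nat.find_spec h
  refine ⟨Nat.find h, hN, hb, fun n hn => ?_⟩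
  have := Nat.find_min h hn
  cases b <;> simp_all [hn.trans hN]

theorem exists_testBit_true_of_mod_two_pow_ne_zero {Q N : ℕ} (h : Q % 2 ^ N ≠ 0) :
    ∃ i < N, Q.testBit i = true := by
  by_contra! hQ
  refine h (eq_of_testBit_eq fun n => ?_)
  by_cases hn : n < N <;> simp [testBit_mod_two_pow, hn, hQ n]

theorem exists_testBit_false_of_mod_two_pow_ne_two_pow_sub_one {Q N : ℕ}
    (h : Q % 2 ^ N ≠ 2 ^ N - 1) :
    ∃ i < N, Q.testBit i = false := by
  by_contra! hQ
  refine h (eq_of_testBit_eq fun n => ?_)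
  by_cases hn : n < N <;> simp [testBit_mod_two_pow, hn, hQ n]

theorem sum_range_succ_toNat_mul_two_pow (f : ℕ → Bool) (L : ℕ) :
    ∑ t ∈ range (L + 1), (f t).toNat * 2 ^ t =
      2 * ∑ t ∈ range L, (f (t + 1)).toNat * 2 ^ t + (f 0).toNat := by
  rw [sum_range_succ', mul_sum]
  simp only [pow_succ, pow_zero, mul_one]
  congr 1
  exact sum_congr rfl fun t _ => by ring

/-- Binary increment: `…x 1 0…0` is the successor of `…x 0 1…1`. -/
theorem sum_toNat_mul_two_pow_eq_succ {f g : ℕ → Bool} {ℓ L : ℕ} (hℓ : ℓ < L)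
    (hf : f ℓ = true) (hg : g ℓ = false) (hlow : ∀ t < ℓ, f t = false ∧ g t = true)
    (hhigh : ∀ t, ℓ < t → f t = g t) :
    ∑ t ∈ range L, (f t).toNat * 2 ^ t = ∑ t ∈ range L, (g t).toNat * 2 ^ t + 1 := by
  induction ℓ generalizing f g L with
  | zero =>
    obtain ⟨L, rfl⟩ : ∃ L', L = L' + 1 := ⟨L - 1, by omega⟩
    have hrest : ∑ t ∈ range L, (f (t + 1)).toNat * 2 ^ t =
        ∑ t ∈ range L, (g (t + 1)).toNat * 2 ^ t :=
      sum_congr rfl fun t _ => by rw [hhigh (t + 1) t.succ_pos]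
    simp [sum_range_succ_toNat_mul_two_pow, hf, hg, hrest]
  | succ ℓ ih =>
    obtain ⟨L, rfl⟩ : ∃ L', L = L' + 1 := ⟨L - 1, by omega⟩
    have hshift := ih (f := fun t => f (t + 1)) (g := fun t => g (t + 1)) (L := L) (by omega)
      hf hg (fun t ht => hlow (t + 1) (by omega)) (fun t ht => hhigh (t + 1) (by omega))
    simp only [sum_range_succ_toNat_mul_two_pow, (hlow 0 ℓ.succ_pos).1, (hlow 0 ℓ.succ_pos).2]
    simp only [Bool.toNat_false, Bool.toNat_true] at hshift ⊢
    omega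

end Nat

theorem mortonCoord_eq_sum_testBit (d L r Q : ℕ) :
    mortonCoord d L r Q = ∑ t ∈ range L, (Q.testBit (t * d + (r - 1))).toNat * 2 ^ t := by
  simp only [mortonCoord, Nat.toNat_testBit]

theorem MortonFaceNbr.symm {d L Q Q' : ℕ} (h : MortonFaceNbr d L Q Q') :
    MortonFaceNbr d L Q' Q := by
  obtain ⟨hne, r, hr1, hrd, hr, hs⟩ := h
  exact ⟨hne.symm, r, hr1, hrd, by omega, fun s hs1 hsd hsr => (hs s hs1 hsd hsr).symm⟩

/-- The bits `n ≤ i` with `n ≡ i [MOD d]`: in dimension `d` these carry the coordinate of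
bit `i` at the levels up to that of bit `i`. -/
def coordLowerBits (d i : ℕ) : ℕ := ∑ n ∈ (range (i + 1)).filter (· % d = i % d), 2 ^ n

theorem testBit_coordLowerBits (d i n : ℕ) :
    (coordLowerBits d i).testBit n = decide (n ≤ i ∧ n % d = i % d) := by
  simp [coordLowerBits, Nat.testBit_sum_two_pow]

theorem testBit_xor_coordLowerBits_of_lt {d i n : ℕ} (Q : ℕ) (h : i < n) :
    (Q ^^^ coordLowerBits d i).testBit n = Q.testBit n := by
  simp [Nat.testBit_xor, testBit_coordLowerBits, h.not_ge]

theorem testBit_xor_coordLowerBits_self (d i Q : ℕ) :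
    (Q ^^^ coordLowerBits d i).testBit i = !Q.testBit i := by
  simp [Nat.testBit_xor, testBit_coordLowerBits]

theorem xor_coordLowerBits_div_two_pow {d i N : ℕ} (Q : ℕ) (h : i < N) :
    (Q ^^^ coordLowerBits d i) / 2 ^ N = Q / 2 ^ N :=
  Nat.eq_of_testBit_eq fun n => by
    simp only [Nat.testBit_div_two_pow, testBit_xor_coordLowerBits_of_lt Q (by omega : i < n + N)]

theorem testBit_xor_coordLowerBits_mul_add {d j s : ℕ} (hj : j < d) (hs : s < d) (Q ℓ t : ℕ) :
    (Q ^^^ coordLowerBits d (ℓ * d + j)).testBit (t * d + s) =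
      (Q.testBit (t * d + s) ^^ decide (s = j ∧ t ≤ ℓ)) := by
  have hd : 0 < d := by omega
  have hpos : t * d + s ≤ ℓ * d + j ∧ s = j ↔ s = j ∧ t ≤ ℓ := by
    constructor
    · rintro ⟨h, rfl⟩
      exact ⟨rfl, (Nat.mul_le_mul_right_iff hd).1 (by omega)⟩
    · rintro ⟨rfl, h⟩
      exact ⟨by have := Nat.mul_le_mul_right d h; omega, rfl⟩
  simp only [Nat.testBit_xor, testBit_coordLowerBits, Nat.mul_add_mod_of_lt hs,
    Nat.mul_add_mod_of_lt hj, hpos]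

theorem mortonFaceNbr_xor_coordLowerBits_of_testBit {d L i Q : ℕ} (hi : i < d * L)
    (hQi : Q.testBit i = true) (hQ : ∀ n < i, n % d = i % d → Q.testBit n = false) :
    MortonFaceNbr d L Q (Q ^^^ coordLowerBits d i) := by
  have hd : 0 < d := Nat.pos_of_ne_zero (by rintro rfl; simp at hi)
  obtain ⟨ℓ, j, hj, rfl⟩ : ∃ ℓ j, j < d ∧ i = ℓ * d + j :=
    ⟨i / d, i % d, Nat.mod_lt i hd, (Nat.div_add_mod' i d).symm⟩
  rw [Nat.mul_add_mod_of_lt hj] at hQ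
  have hℓ : ℓ < L := by
    by_contra! h
    have := Nat.mul_le_mul_right d h
    rw [mul_comm d L] at hi
    omega
  have hbit := testBit_xor_coordLowerBits_mul_add hj hj Q ℓ
  have hne : Q ≠ Q ^^^ coordLowerBits d (ℓ * d + j) := fun h => by
    have := testBit_xor_coordLowerBits_self d (ℓ * d + j) Q
    rw [← h, hQi] at this
    exact Bool.noConfusion this
  refine ⟨hne, j + 1, by omega, by omega, ?_, fun s hs1 hsd hsj => ?_⟩
  · rw [mortonCoord_eq_sum_testBit, mortonCoord_eq_sum_testBit, Nat.add_sub_cancel,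
      Nat.sum_toNat_mul_two_pow_eq_succ hℓ
        (g := fun t => (Q ^^^ coordLowerBits d (ℓ * d + j)).testBit (t * d + j))]
    · push_cast
      omega
    · exact hQi
    · simp [hbit, hQi]
    · intro t ht
      have hQt : Q.testBit (t * d + j) = false :=
        hQ _ (by have := Nat.mul_lt_mul_of_pos_right ht hd; omega) (Nat.mul_add_mod_of_lt hj)
      simp [hbit, hQt, ht.le]
    · intro t ht
      simp [hbit, ht.not_ge]
  · rw [mortonCoord_eq_sum_testBit, mortonCoord_eq_sum_testBit]
    refine sum_congr rfl fun t _ => ?_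
    rw [testBit_xor_coordLowerBits_mul_add hj (s := s - 1) (by omega)]
    simp [show s - 1 ≠ j by omega]

theorem mortonFaceNbr_xor_coordLowerBits {d L i Q : ℕ} (hi : i < d * L)
    (hQ : ∀ n < i, n % d = i % d → Q.testBit n = !Q.testBit i) :
    MortonFaceNbr d L Q (Q ^^^ coordLowerBits d i) := by
  cases hQi : Q.testBit i
  · -- `Q ^^^ coordLowerBits d i` has bit `i` set, and flipping the same bits again gives back `Q`
    have h := mortonFaceNbr_xor_coordLowerBits_of_testBit (Q := Q ^^^ coordLowerBits d i) hi
      (by simp [Nat.testBit_xor, testBit_coordLowerBits, hQi]) fun n hn hmod => by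
        simp [Nat.testBit_xor, testBit_coordLowerBits, hQ n hn hmod, hQi, hn.le, hmod]
    rw [Nat.xor_assoc, Nat.xor_self, Nat.xor_zero] at h
    exact h.symm
  · exact mortonFaceNbr_xor_coordLowerBits_of_testBit hi hQi fun n hn hmod => by
      simpa [hQi] using hQ n hn hmod

theorem exists_mortonFaceNbr_lt_of_mod_two_pow_ne_zero {d L N Q : ℕ} (hN : N ≤ d * L)
    (hQ : Q % 2 ^ N ≠ 0) :
    ∃ Q', MortonFaceNbr d L Q Q' ∧ Q' / 2 ^ N = Q / 2 ^ N ∧ Q' < Q := by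
  obtain ⟨i, hiN, hQi, hlow⟩ :=
    Nat.exists_lowest_testBit_eq true (Nat.exists_testBit_true_of_mod_two_pow_ne_zero hQ)
  refine ⟨Q ^^^ coordLowerBits d i,
    mortonFaceNbr_xor_coordLowerBits (by omega) fun n hn _ => by simp [hlow n hn, hQi],
    xor_coordLowerBits_div_two_pow Q hiN, Nat.lt_of_testBit i ?_ hQi fun n hn => ?_⟩
  · simp [Nat.testBit_xor, testBit_coordLowerBits, hQi]
  · exact testBit_xor_coordLowerBits_of_lt Q hn

theorem exists_mortonFaceNbr_gt_of_mod_two_pow_ne_two_pow_sub_one {d L N Q : ℕ} (hN : N ≤ d * L)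
    (hQ : Q % 2 ^ N ≠ 2 ^ N - 1) :
    ∃ Q', MortonFaceNbr d L Q Q' ∧ Q' / 2 ^ N = Q / 2 ^ N ∧ Q < Q' := by
  obtain ⟨i, hiN, hQi, hlow⟩ :=
    Nat.exists_lowest_testBit_eq false
      (Nat.exists_testBit_false_of_mod_two_pow_ne_two_pow_sub_one hQ)
  refine ⟨Q ^^^ coordLowerBits d i,
    mortonFaceNbr_xor_coordLowerBits (by omega) fun n hn _ => by simp [hlow n hn, hQi],
    xor_coordLowerBits_div_two_pow Q hiN, Nat.lt_of_testBit i hQi ?_ fun n hn => ?_⟩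
  · simp [Nat.testBit_xor, testBit_coordLowerBits, hQi]
  · exact (testBit_xor_coordLowerBits_of_lt Q hn).symm

theorem mortonFaceConnected_of_descent {d L : ℕ} {S : Set ℕ} (c : ℕ) (μ : ℕ → ℕ)
    (h : ∀ Q ∈ S, Q ≠ c → ∃ Q' ∈ S, μ Q' < μ Q ∧ MortonFaceNbr d L Q Q') :
    MortonFaceConnected d L S := by
  let R := fun a b => a ∈ S ∧ b ∈ S ∧ MortonFaceNbr d L a b
  have hR : Std.Symm R := ⟨fun _ _ ⟨ha, hb, hab⟩ => ⟨hb, ha, hab.symm⟩⟩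
  have hc : ∀ Q ∈ S, Relation.ReflTransGen R Q c := by
    intro Q
    induction hμ : μ Q using Nat.strong_induction_on generalizing Q with
    | _ m ih =>
      intro hQ
      by_cases hQc : Q = c
      · rw [hQc]
      · obtain ⟨Q', hQ', hlt, hnbr⟩ := h Q hQ hQc
        exact .head ⟨hQ, hQ', hnbr⟩ (ih _ (hμ ▸ hlt) Q' rfl hQ')
  intro Q hQ Q' hQ'
  exact (hc Q hQ).trans (Relation.ReflTransGen.stdSymm.symm _ _ (hc Q' hQ'))

theorem morton_one_sided_segment_connected_general (d L d' k a b : ℕ)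
    (hL : 1 ≤ L) (hd' : d' ≤ d)
    (ha : k * 2 ^ d' * 2 ^ (d * (L - 1)) ≤ a)
    (hb : b < (k + 1) * 2 ^ d' * 2 ^ (d * (L - 1)))
    (hside : a = k * 2 ^ d' * 2 ^ (d * (L - 1)) ∨
      b = (k + 1) * 2 ^ d' * 2 ^ (d * (L - 1)) - 1) :
    MortonFaceConnected d L (Set.Icc a b) := by
  obtain ⟨L, rfl⟩ : ∃ L', L = L' + 1 := ⟨L - 1, by omega⟩
  simp only [Nat.add_sub_cancel, mul_assoc, ← pow_add] at ha hb hside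
  set N := d' + d * L
  have hN : N ≤ d * (L + 1) := by rw [mul_add_one]; omega
  have hblock : ∀ Q ∈ Set.Icc a b, Q / 2 ^ N = k := fun Q hQ =>
    Nat.div_eq_of_lt_le (ha.trans hQ.1) (hQ.2.trans_lt hb)
  have hdecomp : ∀ Q, Q / 2 ^ N = k → Q = k * 2 ^ N + Q % 2 ^ N ∧ Q % 2 ^ N < 2 ^ N :=
    fun Q hQ => ⟨by rw [← hQ, Nat.div_add_mod'], Nat.mod_lt Q (by positivity)⟩
  rw [add_one_mul] at hb hside
  rcases hside with rfl | rfl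
  · refine mortonFaceConnected_of_descent (k * 2 ^ N) id fun Q hQ hne => ?_
    have hQ_decomp := hdecomp Q (hblock Q hQ)
    obtain ⟨Q', hnbr, hQ'_block, hlt⟩ :=
      exists_mortonFaceNbr_lt_of_mod_two_pow_ne_zero (Q := Q) hN (by omega)
    have hQ'_decomp := hdecomp Q' (hQ'_block.trans (hblock Q hQ))
    obtain ⟨hQa, hQb⟩ := hQ
    exact ⟨Q', ⟨by omega, by omega⟩, hlt, hnbr⟩
  · refine mortonFaceConnected_of_descent (k * 2 ^ N + 2 ^ N - 1) (k * 2 ^ N + 2 ^ N - 1 - ·)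
      fun Q hQ hne => ?_
    have hQ_decomp := hdecomp Q (hblock Q hQ)
    obtain ⟨Q', hnbr, hQ'_block, hlt⟩ :=
      exists_mortonFaceNbr_gt_of_mod_two_pow_ne_two_pow_sub_one (Q := Q) hN (by omega)
    have hQ'_decomp := hdecomp Q' (hQ'_block.trans (hblock Q hQ))
    obtain ⟨hQa, hQb⟩ := hQ
    exact ⟨Q', ⟨by omega, by omega⟩, by omega, hnbr⟩

/-- If a segment of the Morton curve is fully contained in the level-1 subtrees
enumerated by `I^{d'}_k = [k·2^{d'}, (k+1)·2^{d'})` and contains the first or the last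
level-`L` quadrant of this range, then it is face-connected. -/
theorem morton_one_sided_segment_connected (d L d' k a b : ℕ) (hd : 1 ≤ d)
    (hL : 1 ≤ L) (hd' : d' ≤ d) (hk : k < 2 ^ (d - d'))
    (ha : k * 2 ^ d' * 2 ^ (d * (L - 1)) ≤ a) (hab : a ≤ b)
    (hb : b < (k + 1) * 2 ^ d' * 2 ^ (d * (L - 1)))
    (hside : a = k * 2 ^ d' * 2 ^ (d * (L - 1)) ∨
      b = (k + 1) * 2 ^ d' * 2 ^ (d * (L - 1)) - 1) :
    MortonFaceConnected d L (Set.Icc a b) :=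
  morton_one_sided_segment_connected_general d L d' k a b hL hd' ha hb hside
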